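/- For any two probability distributions p and q on a finite set of d elements with total variation distance (1/2)‖p−q‖₁ ≤ ε ≤ 1−1/d, the difference of Shannon entropies satisfies |H(p) − H(q)| ≤ ε·log(d−1) + h(ε), where h is the binary entropy function. -/

import Mathlib

open Matrix BigOperators
open scoped Kronecker ComplexOrder

noncomputable def shannonEntropy {d : ℕ} (p : Fin d → ℝ) : ℝ := ∑ x, Real.negMulLog (p x)

noncomputable def binEnt (x : ℝ) : ℝ := Real.negMulLog x + Real.negMulLog (1 - x)

def IsProb {d : ℕ} (p : Fin d → ℝ) : Prop := (∀ x, 0 ≤ p x) ∧ ∑ x, p x = 1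

def IsDensity {n : Type*} [Fintype n] [DecidableEq n] (ρ : Matrix n n ℂ) : Prop :=
  ρ.PosSemidef ∧ ρ.trace = 1

noncomputable def traceNorm {n : Type*} [Fintype n] [DecidableEq n] (A : Matrix n n ℂ) : ℝ :=
  ∑ i, Real.sqrt ((Matrix.posSemidef_conjTranspose_mul_self A).1.eigenvalues i)

noncomputable def vnEntropy {n : Type*} [Fintype n] [DecidableEq n] (ρ : Matrix n n ℂ) : ℝ :=
  if h : ρ.IsHermitian then ∑ i, Real.negMulLog (h.eigenvalues i) else 0

noncomputable def ptraceA {a b : ℕ} (ρ : Matrix (Fin a × Fin b) (Fin a × Fin b) ℂ) : Matrix (Fin b) (Fin b) ℂ :=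
  Matrix.of fun j j' => ∑ i, ρ (i, j) (i, j')

noncomputable def ptraceB {a b : ℕ} (ρ : Matrix (Fin a × Fin b) (Fin a × Fin b) ℂ) : Matrix (Fin a) (Fin a) ℂ :=
  Matrix.of fun i i' => ∑ j, ρ (i, j) (i', j)

noncomputable def condEnt {a b : ℕ} (ρ : Matrix (Fin a × Fin b) (Fin a × Fin b) ℂ) : ℝ :=
  vnEntropy ρ - vnEntropy (ptraceA ρ)

noncomputable def posPart {n : Type*} [Fintype n] [DecidableEq n] (A : Matrix n n ℂ) : Matrix n n ℂ :=
  if h : A.IsHermitian then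
    (h.eigenvectorUnitary : Matrix n n ℂ) * Matrix.diagonal (fun i => ((max (h.eigenvalues i) 0 : ℝ) : ℂ)) *
      (h.eigenvectorUnitary : Matrix n n ℂ)ᴴ
  else 0

noncomputable def matLog {n : Type*} [Fintype n] [DecidableEq n] (A : Matrix n n ℂ) : Matrix n n ℂ :=
  if h : A.IsHermitian then
    (h.eigenvectorUnitary : Matrix n n ℂ) * Matrix.diagonal (fun i => (Real.log (h.eigenvalues i) : ℂ)) *
      (h.eigenvectorUnitary : Matrix n n ℂ)ᴴ
  else 0

noncomputable def relEnt {n : Type*} [Fintype n] [DecidableEq n] (ρ γ : Matrix n n ℂ) : ℝ :=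
  ((ρ * (matLog ρ - matLog γ)).trace).re

open Classical in
noncomputable def matSqrt {n : Type*} [Fintype n] [DecidableEq n] (A : Matrix n n ℂ) : Matrix n n ℂ :=
  if h : A.PosSemidef then (h.1.eigenvectorUnitary : Matrix n n ℂ) *
    Matrix.diagonal ((↑) ∘ (Real.sqrt ·) ∘ h.1.eigenvalues) * (star h.1.eigenvectorUnitary : Matrix n n ℂ) else 0

noncomputable def fidelity {n : Type*} [Fintype n] [DecidableEq n] (ρ σ : Matrix n n ℂ) : ℝ :=
  traceNorm (matSqrt ρ * matSqrt σ)

noncomputable def maxEig {n : Type*} [Fintype n] [DecidableEq n] (A : Matrix n n ℂ) : ℝ :=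
  if h : A.IsHermitian then ⨆ i, h.eigenvalues i else 0

noncomputable def outer {n : Type*} [Fintype n] (v : n → ℂ) : Matrix n n ℂ :=
  Matrix.vecMulVec v (star v)

/-!
Let `T` be the total variation distance and `m = min p q`. Then `p = (1 - T) m' + T u'` and
`q = (1 - T) m' + T v'` for the probability vectors `m' = m / (1 - T)`, `u' = (p - m) / T` and
`v' = (q - m) / T`. Subadditivity of `x ↦ -x log x` bounds `H p` by `h T + (1 - T) H m' + T H u'`,
concavity bounds `H q` below by `(1 - T) H m'`, and `u'` vanishes wherever `p ≤ q`, so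
`H u' ≤ log (d - 1)`. The resulting bound `T log (d - 1) + h T` is the `d`-ary entropy of `T`,
which is monotone on `[0, 1 - 1/d]`.
-/

open Real Finset

lemma Real.negMulLog_add_le {a b : ℝ} (ha : 0 ≤ a) (hb : 0 ≤ b) :
    negMulLog (a + b) ≤ negMulLog a + negMulLog b := by
  have mul_log_le : ∀ {x y : ℝ}, 0 ≤ x → 0 ≤ y → x * log x ≤ x * log (x + y) := by
    intro x y hx hy
    rcases hx.eq_or_lt with rfl | hx
    · simp
    · exact mul_le_mul_of_nonneg_left (log_le_log hx (by linarith)) hx.le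
  have h₁ := mul_log_le ha hb
  have h₂ := mul_log_le hb ha
  rw [add_comm b] at h₂
  simp only [negMulLog, neg_mul]
  linarith

lemma Real.negMulLog_le_mul_log_add {w n : ℝ} (hw : 0 ≤ w) (hn : 0 < n) :
    negMulLog w ≤ w * log n + (1 / n - w) := by
  have h := negMulLog_le_one_sub_self (mul_nonneg hn.le hw)
  rw [negMulLog_mul, negMulLog] at h
  rw [← mul_le_mul_iff_of_pos_left hn]
  field_simp
  linarith

variable {d : ℕ}

lemma IsProb.div_of_sum_eq {f : Fin d → ℝ} {s : ℝ} (hf : ∀ x, 0 ≤ f x) (hs : ∑ x, f x = s)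
    (hs₀ : 0 < s) : IsProb fun x => f x / s :=
  ⟨fun x => div_nonneg (hf x) hs₀.le, by rw [← sum_div, hs, div_self hs₀.ne']⟩

lemma shannonEntropy_nonneg {w : Fin d → ℝ} (hw : IsProb w) : 0 ≤ shannonEntropy w :=
  sum_nonneg fun x _ =>
    negMulLog_nonneg (hw.1 x) (hw.2 ▸ single_le_sum (fun y _ => hw.1 y) (mem_univ x))

lemma shannonEntropy_le_log_card {w : Fin d → ℝ} (hw : IsProb w) {S : Finset (Fin d)}
    (hS : ∀ x ∉ S, w x = 0) : shannonEntropy w ≤ log #S := by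
  have hsum : ∑ x ∈ S, w x = 1 := by
    rw [← hw.2]
    exact sum_subset (subset_univ S) fun x _ hx => hS x hx
  have hS₀ : (0 : ℝ) < #S := by
    rcases S.eq_empty_or_nonempty with rfl | hne
    · simp at hsum
    · exact_mod_cast hne.card_pos
  calc shannonEntropy w = ∑ x ∈ S, negMulLog (w x) :=
        (sum_subset (subset_univ S) fun x _ hx => by simp [hS x hx]).symm
    _ ≤ ∑ x ∈ S, (w x * log #S + (1 / #S - w x)) :=
        sum_le_sum fun x _ => negMulLog_le_mul_log_add (hw.1 x) hS₀
    _ = log #S := by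
        rw [sum_add_distrib, sum_sub_distrib, ← sum_mul, hsum, sum_const, nsmul_eq_mul,
          mul_one_div_cancel hS₀.ne']
        ring

lemma sum_negMulLog_const_mul {a : Fin d → ℝ} (ha : ∑ x, a x = 1) (t : ℝ) :
    ∑ x, negMulLog (t * a x) = negMulLog t + t * shannonEntropy a := by
  simp only [negMulLog_mul, sum_add_distrib, ← sum_mul, ← mul_sum, ha, one_mul, shannonEntropy]

lemma shannonEntropy_mix_le {a b : Fin d → ℝ} (ha : IsProb a) (hb : IsProb b) {t : ℝ}
    (ht₀ : 0 ≤ t) (ht₁ : t ≤ 1) :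
    shannonEntropy (fun x => (1 - t) * a x + t * b x) ≤
      binEntropy t + (1 - t) * shannonEntropy a + t * shannonEntropy b := by
  calc shannonEntropy (fun x => (1 - t) * a x + t * b x)
      ≤ ∑ x, negMulLog ((1 - t) * a x) + ∑ x, negMulLog (t * b x) := by
        rw [← sum_add_distrib]
        exact sum_le_sum fun x _ =>
          negMulLog_add_le (mul_nonneg (by linarith) (ha.1 x)) (mul_nonneg ht₀ (hb.1 x))
    _ = binEntropy t + (1 - t) * shannonEntropy a + t * shannonEntropy b := by
        rw [sum_negMulLog_const_mul ha.2, sum_negMulLog_const_mul hb.2,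
          binEntropy_eq_negMulLog_add_negMulLog_one_sub]
        ring

lemma le_shannonEntropy_mix {a b : Fin d → ℝ} (ha : ∀ x, 0 ≤ a x) (hb : ∀ x, 0 ≤ b x) {t : ℝ}
    (ht₀ : 0 ≤ t) (ht₁ : t ≤ 1) :
    (1 - t) * shannonEntropy a + t * shannonEntropy b ≤
      shannonEntropy (fun x => (1 - t) * a x + t * b x) := by
  simp only [shannonEntropy, mul_sum, ← sum_add_distrib]
  exact sum_le_sum fun x _ =>
    concaveOn_negMulLog.2 (Set.mem_Ici.2 (ha x)) (Set.mem_Ici.2 (hb x)) (by linarith) ht₀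
      (by ring)

noncomputable def tvDist (p q : Fin d → ℝ) : ℝ := (1 / 2) * ∑ x, |p x - q x|

lemma tvDist_comm (p q : Fin d → ℝ) : tvDist p q = tvDist q p := by
  simp only [tvDist, abs_sub_comm]

lemma sum_sub_min_eq_tvDist {p q : Fin d → ℝ} (h : ∑ x, p x = ∑ x, q x) :
    ∑ x, (p x - min (p x) (q x)) = tvDist p q := by
  have hsymm : ∑ x, (p x - min (p x) (q x)) = ∑ x, (q x - min (p x) (q x)) := by
    rw [sum_sub_distrib, sum_sub_distrib, h]
  have htotal : ∑ x, ((p x - min (p x) (q x)) + (q x - min (p x) (q x))) = ∑ x, |p x - q x| := by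
    refine sum_congr rfl fun x _ => ?_
    rw [abs_sub_comm, ← max_sub_min_eq_abs]
    linarith [min_add_max (p x) (q x)]
  rw [sum_add_distrib, ← hsymm] at htotal
  rw [tvDist, ← htotal]
  ring

lemma tvDist_nonneg (p q : Fin d → ℝ) : 0 ≤ tvDist p q := by
  unfold tvDist
  positivity

lemma tvDist_eq_zero {p q : Fin d → ℝ} (h : tvDist p q = 0) : p = q := by
  have hsum : ∑ x, |p x - q x| = 0 := by rw [tvDist] at h; linarith
  funext x
  exact sub_eq_zero.1 <| abs_eq_zero.1 <|
    (sum_eq_zero_iff_of_nonneg fun y _ => abs_nonneg _).1 hsum x (mem_univ x)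

lemma shannonEntropy_mix_sub_mix_le (hd : 2 ≤ d) {m u v : Fin d → ℝ} (hm : IsProb m)
    (hu : IsProb u) (hv : IsProb v) {x₀ : Fin d} (hx₀ : u x₀ = 0) {T : ℝ} (hT₀ : 0 ≤ T)
    (hT₁ : T ≤ 1) :
    shannonEntropy (fun x => (1 - T) * m x + T * u x) -
        shannonEntropy (fun x => (1 - T) * m x + T * v x) ≤ qaryEntropy d T := by
  have hHu : shannonEntropy u ≤ log (d - 1) := by
    have := shannonEntropy_le_log_card hu (S := univ.erase x₀) fun x hx => by
      rwa [show x = x₀ by simpa using hx]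
    rwa [card_erase_of_mem (mem_univ x₀), card_univ, Fintype.card_fin,
      Nat.cast_sub (by omega), Nat.cast_one] at this
  have hupper := shannonEntropy_mix_le hm hu hT₀ hT₁
  have hlower := le_shannonEntropy_mix hm.1 hv.1 hT₀ hT₁
  have hHv := mul_nonneg hT₀ (shannonEntropy_nonneg hv)
  have hTHu := mul_le_mul_of_nonneg_left hHu hT₀
  rw [qaryEntropy]
  push_cast
  linarith

lemma shannonEntropy_sub_le_qaryEntropy (hd : 2 ≤ d) {p q : Fin d → ℝ} (hp : IsProb p)
    (hq : IsProb q) (hT₁ : tvDist p q < 1) :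
    shannonEntropy p - shannonEntropy q ≤ qaryEntropy d (tvDist p q) := by
  rcases (tvDist_nonneg p q).eq_or_lt with hT₀ | hT₀
  · rw [← hT₀, tvDist_eq_zero hT₀.symm, sub_self, qaryEntropy_zero]
  generalize hT : tvDist p q = T at hT₀ hT₁
  have hmin : ∑ x, min (p x) (q x) = 1 - T := by
    have := (sum_sub_min_eq_tvDist (hp.2.trans hq.2.symm)).trans hT
    rw [sum_sub_distrib, hp.2] at this
    linarith
  have hm := IsProb.div_of_sum_eq (fun x => le_min (hp.1 x) (hq.1 x)) hmin (by linarith)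
  have hu := IsProb.div_of_sum_eq (fun x => sub_nonneg.2 (min_le_left (p x) (q x)))
    (by rw [sum_sub_distrib, hp.2, hmin]; ring) hT₀
  have hv := IsProb.div_of_sum_eq (fun x => sub_nonneg.2 (min_le_right (p x) (q x)))
    (by rw [sum_sub_distrib, hq.2, hmin]; ring) hT₀
  have hmix : ∀ r : Fin d → ℝ,
      r = fun x => (1 - T) * (min (p x) (q x) / (1 - T)) + T * ((r x - min (p x) (q x)) / T) := by
    intro r
    funext x
    field_simp [hT₀.ne', (by linarith : 1 - T ≠ 0)]
    ring
  obtain ⟨x₀, -, hx₀⟩ := exists_le_of_sum_le ⟨⟨0, by omega⟩, mem_univ _⟩ (hp.2.trans hq.2.symm).le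
  have := shannonEntropy_mix_sub_mix_le hd hm hu hv (x₀ := x₀) (by simp [min_eq_left hx₀])
    hT₀.le hT₁.le
  rwa [← hmix p, ← hmix q] at this

lemma mul_log_add_binEnt_eq_qaryEntropy (d : ℕ) (ε : ℝ) :
    ε * log ((d : ℝ) - 1) + binEnt ε = qaryEntropy d ε := by
  simp [qaryEntropy, binEnt, binEntropy_eq_negMulLog_add_negMulLog_one_sub]

theorem stmt_0 {d : ℕ} (hd : 2 ≤ d) (p q : Fin d → ℝ) (hp : IsProb p) (hq : IsProb q)
    (ε : ℝ) (hεd : ε ≤ 1 - 1 / (d : ℝ))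
    (hdist : (1/2) * ∑ x, |p x - q x| ≤ ε) :
    |shannonEntropy p - shannonEntropy q| ≤ ε * Real.log ((d : ℝ) - 1) + binEnt ε := by
  change tvDist p q ≤ ε at hdist
  have hε₁ : ε < 1 := hεd.trans_lt (sub_lt_self 1 (by positivity))
  have bound : ∀ {a b : Fin d → ℝ}, IsProb a → IsProb b → tvDist a b ≤ ε →
      shannonEntropy a - shannonEntropy b ≤ qaryEntropy d ε := fun ha hb hab =>
    (shannonEntropy_sub_le_qaryEntropy hd ha hb (hab.trans_lt hε₁)).trans <|
      (qaryEntropy_strictMonoOn hd).monotoneOn ⟨tvDist_nonneg _ _, hab.trans hεd⟩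
        ⟨(tvDist_nonneg _ _).trans hab, hεd⟩ hab
  rw [mul_log_add_binEnt_eq_qaryEntropy, abs_sub_le_iff]
  exact ⟨bound hp hq hdist, bound hq hp (tvDist_comm p q ▸ hdist)⟩
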